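/- Suppose A ⊆ Φ⁺ and the 2-closure Ā (the smallest closed subset of Φ⁺ containing A) is finite and biclosed. Then Ā = cone(A) ∩ Φ. -/

import Mathlib

open Pointwise

noncomputable section

/-- The set of nonnegative linear combinations of elements of `X`. -/
def coneOf {V : Type*} [AddCommGroup V] [Module ℝ V] (X : Set V) : Set V :=
  {v | ∃ (n : ℕ) (c : Fin n → ℝ) (f : Fin n → V),
    (∀ i, 0 ≤ c i) ∧ (∀ i, f i ∈ X) ∧ ∑ i, c i • f i = v}

/-- A geometric representation of the Coxeter system `cs` on the real quadratic
space `(V, bil)`: each simple generator acts as the `bil`-reflection in its simple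
root, and the simple roots form a simple system. -/
structure GeomRep {B : Type*} [Fintype B] {W : Type*} [Group W]
    (M : CoxeterMatrix B) (cs : CoxeterSystem M W)
    (V : Type*) [AddCommGroup V] [Module ℝ V] where
  /-- the symmetric bilinear form -/
  bil : LinearMap.BilinForm ℝ V
  bil_symm : ∀ u v : V, bil u v = bil v u
  /-- the representation of `W` by linear automorphisms of `V` -/
  π : W →* (V ≃ₗ[ℝ] V)
  /-- the simple roots -/
  α : B → V
  norm_one : ∀ i, bil (α i) (α i) = 1
  simple_refl : ∀ i v, π (cs.simple i) v = v - (2 * bil (α i) v) • α i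
  pos_indep : ∀ c : B → ℝ, (∀ i, 0 ≤ c i) → ∑ i, c i • α i = 0 → ∀ i, c i = 0
  angle_finite : ∀ i j, i ≠ j → M.M i j ≠ 0 →
    bil (α i) (α j) = - Real.cos (Real.pi / (M.M i j : ℝ))
  angle_infinite : ∀ i j, i ≠ j → M.M i j = 0 → bil (α i) (α j) ≤ -1

namespace GeomRep

variable {B : Type*} [Fintype B] {W : Type*} [Group W]
  {M : CoxeterMatrix B} {cs : CoxeterSystem M W}
  {V : Type*} [AddCommGroup V] [Module ℝ V]

/-- The root system `Φ = W(Δ)`. -/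
def Phi (G : GeomRep M cs V) : Set V := {v | ∃ (w : W) (i : B), G.π w (G.α i) = v}

/-- The positive roots `Φ⁺ = cone(Δ) ∩ Φ`. -/
def PhiPos (G : GeomRep M cs V) : Set V := G.Phi ∩ coneOf (Set.range G.α)

/-- The (left) inversion set `N(w) = Φ⁺ ∩ w(Φ⁻)`. -/
def N (G : GeomRep M cs V) (w : W) : Set V := G.PhiPos ∩ (G.π w '' (-G.PhiPos))

/-- `A ⊆ Φ⁺` is closed if for all `α, β ∈ A`, every root in `cone(α,β)` lies in `A`. -/
def IsClosedSet (G : GeomRep M cs V) (A : Set V) : Prop :=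
  ∀ a ∈ A, ∀ b ∈ A, coneOf {a, b} ∩ G.Phi ⊆ A

/-- `A` is biclosed if `A` and `Φ⁺ \ A` are both closed. -/
def IsBiclosed (G : GeomRep M cs V) (A : Set V) : Prop :=
  G.IsClosedSet A ∧ G.IsClosedSet (G.PhiPos \ A)

/-- `A` is convex if `A = cone(A) ∩ Φ`. -/
def IsConvexSet (G : GeomRep M cs V) (A : Set V) : Prop :=
  A = coneOf A ∩ G.Phi

/-- `A` is biconvex if `A` and `Φ⁺ \ A` are both convex. -/
def IsBiconvex (G : GeomRep M cs V) (A : Set V) : Prop :=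
  G.IsConvexSet A ∧ G.IsConvexSet (G.PhiPos \ A)

/-- `A ⊆ Φ⁺` is separable if `cone(A) ∩ cone(Φ⁺ \ A) = {0}`. -/
def IsSeparable (G : GeomRep M cs V) (A : Set V) : Prop :=
  coneOf A ∩ coneOf (G.PhiPos \ A) = {0}

end GeomRep

/-- The right weak order on a Coxeter group. -/
def WeakLE {B : Type*} {W : Type*} [Group W] {M : CoxeterMatrix B}
    (cs : CoxeterSystem M W) (u w : W) : Prop :=
  cs.length u + cs.length (u⁻¹ * w) = cs.length w

/-- The 2-closure of `A`: the smallest closed subset of `Φ⁺` containing `A`. -/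
def GeomRep.closure2 {B : Type*} [Fintype B] {W : Type*} [Group W]
    {M : CoxeterMatrix B} {cs : CoxeterSystem M W}
    {V : Type*} [AddCommGroup V] [Module ℝ V] (G : GeomRep M cs V) (A : Set V) : Set V :=
  ⋂₀ {C : Set V | A ⊆ C ∧ C ⊆ G.PhiPos ∧ G.IsClosedSet C}

/-!
Write `Δ` for the simple roots. A finite set `C ⊆ Φ⁺` whose complement `Φ⁺ \ C` is closed
contains a simple root: take `β ∈ C` minimal for the root order; some `α i` has
`B(α i, β) > 0`, so `β = t α i + s_i β` with `t > 0`, and `s_i β` either lies in `C` below `β`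
or, together with `α i`, forces `β ∉ C` by closedness of the complement. If `C` is biclosed and
contains `α i`, then `s_i (C \ {α i})` (stated as a preimage, `s_i` being an involution) is
again biclosed and smaller, so by induction `C` is an inversion set: some `w` maps `C` into
`-cone Δ` and `Φ⁺ \ C` into `cone Δ`. Hence `cone C ∩ cone (Φ⁺ \ C) = {0}`, and for `C = Ā` a
root of `cone A` outside `Ā` would be a nonzero vector in both cones; the other inclusion holds
because `cone A ∩ Φ` is closed.

The Coxeter-theoretic input is that `s_i` permutes `Φ⁺ \ {α i}`, which rests on every root
being positive or negative. That is proved by the usual reduction to rank two: in the dihedral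
subgroup generated by `s_i, s_j` the coefficients of `w(α i)` are values of the Chebyshev
polynomials `U_k` at `-B(α i, α j)`, which are nonnegative as long as the alternating word
stays reduced.
-/

section Cone

variable {V : Type*} [AddCommGroup V] [Module ℝ V]

theorem coneOf_eq_hull (X : Set V) : coneOf X = PointedCone.hull ℝ X := by
  ext v
  simp only [SetLike.mem_coe, Submodule.mem_span_set']
  constructor
  · rintro ⟨n, c, f, hc, hf, rfl⟩
    exact ⟨n, fun i => ⟨c i, hc i⟩, fun i => ⟨f i, hf i⟩, rfl⟩
  · rintro ⟨n, c, f, rfl⟩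
    exact ⟨n, fun i => c i, fun i => f i, fun i => (c i).2, fun i => (f i).2, rfl⟩

theorem mem_coneOf_of_mem {X : Set V} {v : V} (h : v ∈ X) : v ∈ coneOf X := by
  rw [coneOf_eq_hull]; exact Submodule.subset_span h

theorem mem_coneOf_pair {a b v : V} :
    v ∈ coneOf {a, b} ↔ ∃ x y : ℝ, 0 ≤ x ∧ 0 ≤ y ∧ x • a + y • b = v := by
  rw [coneOf_eq_hull, SetLike.mem_coe, Submodule.mem_span_pair]
  constructor
  · rintro ⟨x, y, rfl⟩
    exact ⟨x, y, x.2, y.2, rfl⟩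
  · rintro ⟨x, y, hx, hy, rfl⟩
    exact ⟨⟨x, hx⟩, ⟨y, hy⟩, rfl⟩

theorem coneOf_mono {X Y : Set V} (h : X ⊆ Y) : coneOf X ⊆ coneOf Y := by
  rw [coneOf_eq_hull, coneOf_eq_hull]; exact Submodule.span_mono h

end Cone

namespace Polynomial.Chebyshev

theorem U_eval_cos_pi_div_nonneg {m : ℕ} (hm : 2 ≤ m) {n : ℤ} (hn₁ : -1 ≤ n)
    (hn₂ : n + 1 ≤ m) : 0 ≤ (U ℝ n).eval (Real.cos (Real.pi / m)) := by
  have hm' : (2 : ℝ) ≤ m := by exact_mod_cast hm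
  have hsin : 0 < Real.sin (Real.pi / m) := Real.sin_pos_of_pos_of_lt_pi (by positivity)
    (div_lt_self Real.pi_pos (by linarith))
  have hn₁' : (0 : ℝ) ≤ n + 1 := by exact_mod_cast (by omega : (0 : ℤ) ≤ n + 1)
  have hn₂' : (n : ℝ) + 1 ≤ m := by exact_mod_cast hn₂
  have key := U_real_cos (Real.pi / m) n
  refine nonneg_of_mul_nonneg_left (key ▸ Real.sin_nonneg_of_nonneg_of_le_pi
    (by positivity) ?_) hsin
  calc ((n : ℝ) + 1) * (Real.pi / m) ≤ m * (Real.pi / m) := by gcongr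
    _ = Real.pi := by field_simp

theorem U_eval_nonneg_of_one_le {c : ℝ} (hc : 1 ≤ c) {n : ℤ} (hn : -1 ≤ n) :
    0 ≤ (U ℝ n).eval c := by
  suffices h : 0 ≤ (U ℝ n).eval c ∧ (U ℝ n).eval c ≤ (U ℝ (n + 1)).eval c from h.1
  induction n, hn using Int.leInduction with
  | base => simp [U_neg_one, U_zero]
  | succ n _ ih =>
    have hrec : (U ℝ (n + 1 + 1)).eval c = 2 * c * (U ℝ (n + 1)).eval c - (U ℝ n).eval c := by
      simp [U_add_one]
    constructor <;> nlinarith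

end Polynomial.Chebyshev

theorem CoxeterMatrix.two_le_of_ne {B : Type*} (M : CoxeterMatrix B) {i j : B} (hij : i ≠ j)
    (hM : M i j ≠ 0) : 2 ≤ M i j := by
  have := M.off_diagonal i j hij
  omega

namespace CoxeterSystem

variable {B W : Type*} [Group W] {M : CoxeterMatrix B} (cs : CoxeterSystem M W)

local prefix:100 "s" => cs.simple
local prefix:100 "π" => cs.wordProd
local prefix:100 "ℓ" => cs.length

theorem exists_eq_mul_alternatingWord {w : W} {i j : B} (hi : ¬ cs.IsRightDescent w i) :
    ∃ (u : W) (k : ℕ), ¬ cs.IsRightDescent u i ∧ ¬ cs.IsRightDescent u j ∧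
      ℓ u + k = ℓ w ∧ w = u * π (alternatingWord i j k) := by
  induction hw : ℓ w using Nat.strong_induction_on generalizing w i j with
  | _ n ih =>
    by_cases hj : cs.IsRightDescent w j
    · have hlen : ℓ (w * s j) + 1 = ℓ w := cs.isRightDescent_iff.1 hj
      have hj' : ¬ cs.IsRightDescent (w * s j) j :=
        cs.isRightDescent_iff_not_isRightDescent_mul.1 hj
      obtain ⟨u, k, huj, hui, hlen', hu⟩ := ih _ (by omega) (j := i) hj' rfl
      refine ⟨u, k + 1, hui, huj, by omega, ?_⟩
      rw [alternatingWord_succ, wordProd_concat, ← mul_assoc, ← hu,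
        simple_mul_simple_cancel_right]
    · exact ⟨w, 0, hi, hj, by simpa using hw, by simp [alternatingWord]⟩

theorem succ_le_of_eq_mul_alternatingWord {w u : W} {i j : B} {k : ℕ}
    (hi : ¬ cs.IsRightDescent w i) (hlen : ℓ u + k = ℓ w)
    (hw : w = u * π (alternatingWord i j k)) (hM : M i j ≠ 0) : k + 1 ≤ M i j := by
  have hred : cs.IsReduced (alternatingWord j i (k + 1)) := by
    have h₁ := cs.not_isRightDescent_iff.1 hi
    have h₂ := cs.length_mul_le u (π (alternatingWord j i (k + 1)))
    have h₃ := cs.length_wordProd_le (alternatingWord j i (k + 1))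
    rw [← (by rw [hw, alternatingWord_succ, wordProd_concat, mul_assoc] :
      w * s i = u * π (alternatingWord j i (k + 1)))] at h₂
    rw [length_alternatingWord] at h₃
    unfold IsReduced
    rw [length_alternatingWord]
    omega
  by_contra h
  exact cs.not_isReduced_alternatingWord j i (M.symmetric i j ▸ hM)
    (by rw [M.symmetric j i]; omega) hred

end CoxeterSystem

open Polynomial.Chebyshev

namespace GeomRep

variable {B : Type*} [Fintype B] {W : Type*} [Group W] {M : CoxeterMatrix B}
  {cs : CoxeterSystem M W} {V : Type*} [AddCommGroup V] [Module ℝ V] (G : GeomRep M cs V)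

abbrev posCone : PointedCone ℝ V := PointedCone.hull ℝ (Set.range G.α)

theorem mem_PhiPos {γ : V} : γ ∈ G.PhiPos ↔ γ ∈ G.Phi ∧ γ ∈ G.posCone := by
  rw [PhiPos, coneOf_eq_hull]; rfl

theorem alpha_mem_posCone (i : B) : G.α i ∈ G.posCone :=
  Submodule.subset_span (Set.mem_range_self i)

theorem mem_posCone_iff {v : V} :
    v ∈ G.posCone ↔ ∃ e : B → ℝ, (∀ b, 0 ≤ e b) ∧ ∑ b, e b • G.α b = v := by
  rw [Submodule.mem_span_range_iff_exists_fun]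
  constructor
  · rintro ⟨e, rfl⟩
    exact ⟨fun b => e b, fun b => (e b).2, rfl⟩
  · rintro ⟨e, he, rfl⟩
    exact ⟨fun b => ⟨e b, he b⟩, rfl⟩

theorem pi_mul_apply (w₁ w₂ : W) (v : V) : G.π (w₁ * w₂) v = G.π w₁ (G.π w₂ v) := by
  rw [map_mul]; rfl

theorem pi_simple_alpha (i : B) : G.π (cs.simple i) (G.α i) = -G.α i := by
  rw [G.simple_refl, G.norm_one]
  module

theorem pi_simple_pi_simple (i : B) (v : V) : G.π (cs.simple i) (G.π (cs.simple i) v) = v := by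
  rw [← pi_mul_apply, cs.simple_mul_simple_self, map_one]; rfl

theorem bil_pi_pi (w : W) (u v : V) : G.bil (G.π w u) (G.π w v) = G.bil u v := by
  induction w using cs.simple_induction generalizing u v with
  | simple i =>
    simp only [G.simple_refl, map_sub, map_smul, LinearMap.sub_apply, LinearMap.smul_apply,
      smul_eq_mul, G.norm_one, G.bil_symm u (G.α i)]
    ring
  | one => rw [map_one]; rfl
  | mul w₁ w₂ h₁ h₂ => rw [pi_mul_apply, pi_mul_apply, h₁, h₂]

theorem alpha_mem_Phi (i : B) : G.α i ∈ G.Phi := ⟨1, i, by rw [map_one]; rfl⟩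

theorem pi_mem_Phi (w : W) {γ : V} (h : γ ∈ G.Phi) : G.π w γ ∈ G.Phi := by
  obtain ⟨w', i, rfl⟩ := h
  exact ⟨w * w', i, G.pi_mul_apply w w' _⟩

theorem alpha_mem_PhiPos (i : B) : G.α i ∈ G.PhiPos :=
  G.mem_PhiPos.2 ⟨G.alpha_mem_Phi i, G.alpha_mem_posCone i⟩

theorem bil_self_of_mem_Phi {γ : V} (h : γ ∈ G.Phi) : G.bil γ γ = 1 := by
  obtain ⟨w, i, rfl⟩ := h
  rw [bil_pi_pi, norm_one]

theorem ne_zero_of_mem_Phi {γ : V} (h : γ ∈ G.Phi) : γ ≠ 0 := by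
  rintro rfl
  simpa using G.bil_self_of_mem_Phi h

theorem eq_zero_of_mem_posCone_of_neg_mem {v : V} (h₁ : v ∈ G.posCone)
    (h₂ : -v ∈ G.posCone) : v = 0 := by
  obtain ⟨e, he, rfl⟩ := G.mem_posCone_iff.1 h₁
  obtain ⟨d, hd, hsum⟩ := G.mem_posCone_iff.1 h₂
  have hzero := G.pos_indep (e + d) (fun b => add_nonneg (he b) (hd b))
    (by simp [add_smul, Finset.sum_add_distrib, hsum])
  have he0 : ∀ b, e b = 0 := fun b => by linarith [show e b + d b = 0 from hzero b, he b, hd b]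
  simp [he0]

theorem bil_alpha_alpha_nonpos {i j : B} (h : i ≠ j) : G.bil (G.α i) (G.α j) ≤ 0 := by
  by_cases hM : M.M i j = 0
  · linarith [G.angle_infinite i j h hM]
  · have hm : (2 : ℝ) ≤ M.M i j := by exact_mod_cast M.two_le_of_ne h hM
    have hθ : 0 ≤ Real.pi / M.M i j := by positivity
    rw [G.angle_finite i j h hM, neg_nonpos]
    exact Real.cos_nonneg_of_mem_Icc
      ⟨by linarith [Real.pi_pos], div_le_div_of_nonneg_left Real.pi_pos.le two_pos hm⟩

theorem bil_alpha_sum_le (i : B) {q : B → ℝ} (hq : ∀ b, 0 ≤ q b) :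
    G.bil (G.α i) (∑ b, q b • G.α b) ≤ q i := by
  classical
  simp only [map_sum, map_smul, smul_eq_mul]
  rw [← Finset.add_sum_erase _ _ (Finset.mem_univ i), G.norm_one, mul_one]
  refine add_le_of_nonpos_right (Finset.sum_nonpos fun b hb => ?_)
  exact mul_nonpos_of_nonneg_of_nonpos (hq b)
    (G.bil_alpha_alpha_nonpos (Finset.ne_of_mem_erase hb).symm)

theorem exists_eq_smul_alpha_of_add_eq_alpha {x y : V} {i : B} (hx : x ∈ G.posCone)
    (hy : y ∈ G.posCone) (h : x + y = G.α i) : ∃ t : ℝ, 0 ≤ t ∧ x = t • G.α i := by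
  classical
  obtain ⟨e, he, rfl⟩ := G.mem_posCone_iff.1 hx
  obtain ⟨d, hd, rfl⟩ := G.mem_posCone_iff.1 hy
  have hqnn : ∀ b, 0 ≤ e b + d b := fun b => add_nonneg (he b) (hd b)
  have hsum : ∑ b, (e b + d b) • G.α b = G.α i := by
    simpa [add_smul, Finset.sum_add_distrib] using h
  have hqi : 1 ≤ e i + d i := by simpa [hsum, G.norm_one] using G.bil_alpha_sum_le i hqnn
  have hzero := G.pos_indep (fun b => e b + d b - (Pi.single i 1 : B → ℝ) b)
    (fun b => by rcases eq_or_ne b i with rfl | hb <;> simp [*])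
    (by simp [sub_smul, Finset.sum_sub_distrib, hsum, Pi.single_apply])
  have he0 : ∀ b ≠ i, e b = 0 := fun b hb => by
    have := hzero b
    simp only [Pi.single_eq_of_ne hb, sub_zero] at this
    linarith [he b, hd b]
  exact ⟨e i, he i, Finset.sum_eq_single i (fun b _ hb => by simp [he0 b hb]) (by simp)⟩

theorem eq_alpha_of_eq_smul {γ : V} (hγ : γ ∈ G.Phi) {i : B} {t : ℝ} (ht : 0 ≤ t)
    (h : γ = t • G.α i) : γ = G.α i := by
  have h1 := G.bil_self_of_mem_Phi hγ
  simp only [h, map_smul, LinearMap.smul_apply, smul_eq_mul, G.norm_one, mul_one] at h1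
  have : t = 1 := by nlinarith
  rw [h, this, one_smul]

def dihedralRoot (i j : B) (k : ℕ) : V :=
  (U ℝ k).eval (-G.bil (G.α i) (G.α j)) • G.α i +
    (U ℝ (k - 1 : ℤ)).eval (-G.bil (G.α i) (G.α j)) • G.α j

theorem pi_simple_dihedralRoot (i j : B) (k : ℕ) :
    G.π (cs.simple j) (G.dihedralRoot i j k) = G.dihedralRoot j i (k + 1) := by
  simp only [dihedralRoot, G.simple_refl, map_add, map_smul, G.norm_one,
    G.bil_symm (G.α j) (G.α i), Nat.cast_add, Nat.cast_one, add_sub_cancel_right, U_add_one,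
    Polynomial.eval_sub, Polynomial.eval_mul, Polynomial.eval_X, Polynomial.eval_ofNat]
  module

theorem pi_alternatingWord_alpha (i j : B) (k : ℕ) :
    G.π (cs.wordProd (CoxeterSystem.alternatingWord i j k)) (G.α i) =
      if Even k then G.dihedralRoot i j k else G.dihedralRoot j i k := by
  induction k with
  | zero =>
    simp [CoxeterSystem.alternatingWord, dihedralRoot, U_neg_one]
  | succ k ih =>
    rw [CoxeterSystem.alternatingWord_succ', CoxeterSystem.wordProd_cons, pi_mul_apply, ih]
    rcases Nat.even_or_odd k with hk | hk
    · simp [hk, Nat.even_add_one, pi_simple_dihedralRoot]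
    · simp [Nat.not_even_iff_odd.2 hk, Nat.even_add_one, pi_simple_dihedralRoot]

theorem U_eval_nonneg {i j : B} (hij : i ≠ j) {n : ℤ} (hn : -1 ≤ n)
    (hM : M.M i j ≠ 0 → n + 1 ≤ M.M i j) :
    0 ≤ (U ℝ n).eval (-G.bil (G.α i) (G.α j)) := by
  by_cases hM0 : M.M i j = 0
  · exact U_eval_nonneg_of_one_le (by linarith [G.angle_infinite i j hij hM0]) hn
  · rw [G.angle_finite i j hij hM0, neg_neg]
    exact U_eval_cos_pi_div_nonneg (M.two_le_of_ne hij hM0) hn (hM hM0)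

theorem pi_dihedralRoot_mem_posCone {u : W} {i j : B} {k : ℕ} (hij : i ≠ j)
    (hk : M.M i j ≠ 0 → k + 1 ≤ M.M i j) (hi : G.π u (G.α i) ∈ G.posCone)
    (hj : G.π u (G.α j) ∈ G.posCone) : G.π u (G.dihedralRoot i j k) ∈ G.posCone := by
  rw [dihedralRoot, map_add, map_smul, map_smul]
  refine add_mem (G.posCone.smul_mem (G.U_eval_nonneg hij (by omega) ?_) hi)
    (G.posCone.smul_mem (G.U_eval_nonneg hij (by omega) ?_) hj)
  all_goals intro hM; have := hk hM; omega

theorem pi_alpha_mem_posCone {w : W} {i : B} (hi : ¬ cs.IsRightDescent w i) :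
    G.π w (G.α i) ∈ G.posCone := by
  induction hw : cs.length w using Nat.strong_induction_on generalizing w i with
  | _ n ih =>
  rcases eq_or_ne w 1 with rfl | hw1
  · rw [map_one]; exact G.alpha_mem_posCone i
  obtain ⟨j, hj⟩ := cs.exists_rightDescent_of_ne_one hw1
  have hij : i ≠ j := by rintro rfl; exact hi hj
  obtain ⟨u, k, hui, huj, hlen, rfl⟩ := cs.exists_eq_mul_alternatingWord (j := j) hi
  have hk : k ≠ 0 := by rintro rfl; simp [CoxeterSystem.alternatingWord] at hj; exact huj hj
  have hbound := fun hM => cs.succ_le_of_eq_mul_alternatingWord hi hlen rfl hM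
  have hui' := ih (cs.length u) (by omega) hui rfl
  have huj' := ih (cs.length u) (by omega) huj rfl
  rw [pi_mul_apply, pi_alternatingWord_alpha]
  split_ifs
  · exact G.pi_dihedralRoot_mem_posCone hij hbound hui' huj'
  · exact G.pi_dihedralRoot_mem_posCone hij.symm (M.symmetric i j ▸ hbound) huj' hui'

theorem pi_alpha_mem_PhiPos {w : W} {i : B} (hi : ¬ cs.IsRightDescent w i) :
    G.π w (G.α i) ∈ G.PhiPos :=
  G.mem_PhiPos.2 ⟨G.pi_mem_Phi w (G.alpha_mem_Phi i), G.pi_alpha_mem_posCone hi⟩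

theorem mem_PhiPos_or_neg_mem_PhiPos {γ : V} (h : γ ∈ G.Phi) :
    γ ∈ G.PhiPos ∨ -γ ∈ G.PhiPos := by
  obtain ⟨w, i, rfl⟩ := h
  by_cases hi : cs.IsRightDescent w i
  · have h := G.pi_alpha_mem_PhiPos (cs.isRightDescent_iff_not_isRightDescent_mul.1 hi)
    rw [pi_mul_apply, pi_simple_alpha, map_neg] at h
    exact Or.inr h
  · exact Or.inl (G.pi_alpha_mem_PhiPos hi)

theorem neg_notMem_PhiPos {γ : V} (h : γ ∈ G.PhiPos) : -γ ∉ G.PhiPos := fun h' =>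
  G.ne_zero_of_mem_Phi (G.mem_PhiPos.1 h).1
    (G.eq_zero_of_mem_posCone_of_neg_mem (G.mem_PhiPos.1 h).2 (G.mem_PhiPos.1 h').2)

theorem pi_simple_mem_PhiPos {β : V} {i : B} (hβ : β ∈ G.PhiPos) (hne : β ≠ G.α i) :
    G.π (cs.simple i) β ∈ G.PhiPos := by
  obtain ⟨hβΦ, hβC⟩ := G.mem_PhiPos.1 hβ
  refine (G.mem_PhiPos_or_neg_mem_PhiPos (G.pi_mem_Phi _ hβΦ)).resolve_right fun hneg => ?_
  have hnegC := (G.mem_PhiPos.1 hneg).2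
  set t := 2 * G.bil (G.α i) β
  have key : β + -G.π (cs.simple i) β = t • G.α i := by rw [G.simple_refl]; abel
  rcases le_or_gt t 0 with ht | ht
  · refine G.ne_zero_of_mem_Phi hβΦ (G.eq_zero_of_mem_posCone_of_neg_mem hβC ?_)
    have : -β = -G.π (cs.simple i) β + (-t) • G.α i := by rw [neg_smul, ← key]; abel
    rw [this]
    exact add_mem hnegC (G.posCone.smul_mem (by linarith) (G.alpha_mem_posCone i))
  · obtain ⟨s, hs, hsβ⟩ := G.exists_eq_smul_alpha_of_add_eq_alpha
      (G.posCone.smul_mem (inv_nonneg.2 ht.le) hβC)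
      (G.posCone.smul_mem (inv_nonneg.2 ht.le) hnegC)
      (by rw [← smul_add, key, smul_smul, inv_mul_cancel₀ ht.ne', one_smul])
    refine hne (G.eq_alpha_of_eq_smul hβΦ (mul_nonneg ht.le hs) ?_)
    rw [mul_smul, ← hsβ, smul_smul, mul_inv_cancel₀ ht.ne', one_smul]

theorem pi_simple_ne_alpha {β : V} (hβ : β ∈ G.PhiPos) (i : B) :
    G.π (cs.simple i) β ≠ G.α i := fun h => by
  refine G.neg_notMem_PhiPos (G.alpha_mem_PhiPos i) ?_
  rwa [← G.pi_simple_alpha, ← h, pi_simple_pi_simple]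

theorem coneOf_inter_Phi_subset_PhiPos {X : Set V} (hX : X ⊆ G.posCone) :
    coneOf X ∩ G.Phi ⊆ G.PhiPos := by
  rintro γ ⟨hγ, hΦ⟩
  rw [coneOf_eq_hull] at hγ
  exact G.mem_PhiPos.2 ⟨hΦ, Submodule.span_le.2 hX hγ⟩

theorem isClosedSet_PhiPos : G.IsClosedSet G.PhiPos := fun a ha b hb =>
  G.coneOf_inter_Phi_subset_PhiPos <| by
    rintro x (rfl | rfl)
    exacts [(G.mem_PhiPos.1 ha).2, (G.mem_PhiPos.1 hb).2]

theorem isClosedSet_coneOf_inter_Phi (A : Set V) : G.IsClosedSet (coneOf A ∩ G.Phi) := by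
  rintro a ⟨ha, -⟩ b ⟨hb, -⟩ γ ⟨hγ, hΦ⟩
  rw [coneOf_eq_hull] at ha hb hγ ⊢
  refine ⟨Submodule.span_le.2 ?_ hγ, hΦ⟩
  rintro x (rfl | rfl)
  exacts [ha, hb]

theorem IsClosedSet.preimage_pi {A : Set V} (hA : G.IsClosedSet A) (w : W) :
    G.IsClosedSet (G.π w ⁻¹' A) := by
  rintro a ha b hb γ ⟨hγ, hΦ⟩
  refine hA _ ha _ hb ⟨?_, G.pi_mem_Phi w hΦ⟩
  obtain ⟨x, y, hx, hy, rfl⟩ := mem_coneOf_pair.1 hγ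
  exact mem_coneOf_pair.2 ⟨x, y, hx, hy, by simp⟩

theorem IsClosedSet.insert {A : Set V} {a : V} (hA : G.IsClosedSet A)
    (haa : coneOf {a, a} ∩ G.Phi ⊆ insert a A)
    (hab : ∀ b ∈ A, coneOf {a, b} ∩ G.Phi ⊆ insert a A) : G.IsClosedSet (insert a A) := by
  rintro x (rfl | hx) y (rfl | hy)
  · exact haa
  · exact hab y hy
  · rw [Set.pair_comm]; exact hab x hx
  · exact (hA x hx y hy).trans (Set.subset_insert _ _)

theorem eq_alpha_of_smul_eq {a : V} (ha : a ∈ G.Phi) {i : B} {x t : ℝ} (hx : 0 < x)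
    (ht : 0 ≤ t) (h : x • a = t • G.α i) : a = G.α i := by
  refine G.eq_alpha_of_eq_smul ha (div_nonneg ht hx.le) ?_
  rw [div_eq_inv_mul, mul_smul, ← h, smul_smul, inv_mul_cancel₀ hx.ne', one_smul]

theorem IsClosedSet.diff_alpha {A : Set V} (hA : G.IsClosedSet A) (hApos : A ⊆ G.PhiPos)
    (i : B) : G.IsClosedSet (A \ {G.α i}) := by
  rintro a ⟨ha, hai⟩ b ⟨hb, hbi⟩ γ hγ
  refine ⟨hA a ha b hb hγ, fun (hγi : γ = G.α i) => ?_⟩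
  obtain ⟨x, y, hx, hy, hxy⟩ := mem_coneOf_pair.1 hγ.1
  obtain ⟨haΦ, haC⟩ := G.mem_PhiPos.1 (hApos ha)
  obtain ⟨hbΦ, hbC⟩ := G.mem_PhiPos.1 (hApos hb)
  rw [hγi] at hxy
  rcases hx.eq_or_lt with rfl | hx
  · rw [zero_smul, zero_add] at hxy
    rcases hy.eq_or_lt with rfl | hy
    · exact G.ne_zero_of_mem_Phi (G.alpha_mem_Phi i) (by rw [← hxy, zero_smul])
    · exact hbi (G.eq_alpha_of_smul_eq hbΦ hy zero_le_one (by rw [hxy, one_smul]))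
  · obtain ⟨t, ht, hxa⟩ := G.exists_eq_smul_alpha_of_add_eq_alpha
      (G.posCone.smul_mem hx.le haC) (G.posCone.smul_mem hy hbC) hxy
    exact hai (G.eq_alpha_of_smul_eq haΦ hx ht hxa)

theorem PhiPos_diff_preimage_pi_simple {C : Set V} (hC : C ⊆ G.PhiPos) {i : B}
    (hi : G.α i ∈ C) :
    G.PhiPos \ G.π (cs.simple i) ⁻¹' (C \ {G.α i}) =
      insert (G.α i) (G.π (cs.simple i) ⁻¹' (G.PhiPos \ C)) := by
  ext γ
  constructor
  · rintro ⟨hγ, hγC⟩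
    rcases eq_or_ne γ (G.α i) with rfl | hne
    · exact Set.mem_insert _ _
    · exact Or.inr ⟨G.pi_simple_mem_PhiPos hγ hne, fun h => hγC ⟨h, G.pi_simple_ne_alpha hγ i⟩⟩
  · rintro (rfl | ⟨hσγ, hσγC⟩)
    · refine ⟨G.alpha_mem_PhiPos i, fun h => G.neg_notMem_PhiPos (G.alpha_mem_PhiPos i) ?_⟩
      rw [← G.pi_simple_alpha]
      exact hC h.1
    · have hne : G.π (cs.simple i) γ ≠ G.α i := fun h => hσγC (h ▸ hi)
      refine ⟨?_, fun h => hσγC h.1⟩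
      simpa [pi_simple_pi_simple] using G.pi_simple_mem_PhiPos hσγ hne

theorem IsBiclosed.preimage_pi_simple {C : Set V} (hbc : G.IsBiclosed C) (hC : C ⊆ G.PhiPos)
    {i : B} (hi : G.α i ∈ C) : G.IsBiclosed (G.π (cs.simple i) ⁻¹' (C \ {G.α i})) := by
  set σ := G.π (cs.simple i)
  refine ⟨(hbc.1.diff_alpha G hC i).preimage_pi G _, ?_⟩
  rw [G.PhiPos_diff_preimage_pi_simple hC hi]
  refine (hbc.2.preimage_pi G _).insert G ?_ ?_
  · rintro γ ⟨hγ, hΦ⟩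
    obtain ⟨x, y, hx, hy, rfl⟩ := mem_coneOf_pair.1 hγ
    left
    exact G.eq_alpha_of_eq_smul hΦ (add_nonneg hx hy) (add_smul x y _).symm
  · rintro b ⟨hσb, hσbC⟩ γ ⟨hγ, hΦ⟩
    have hb : b ∈ G.PhiPos := by
      simpa [σ, pi_simple_pi_simple] using
        G.pi_simple_mem_PhiPos hσb (fun h => hσbC (h ▸ hi))
    have hγpos : γ ∈ G.PhiPos := G.isClosedSet_PhiPos _ (G.alpha_mem_PhiPos i) _ hb ⟨hγ, hΦ⟩
    rcases eq_or_ne γ (G.α i) with rfl | hγi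
    · exact Set.mem_insert _ _
    refine Or.inr ⟨G.pi_simple_mem_PhiPos hγpos hγi, fun hσγC => ?_⟩
    obtain ⟨x, y, hx, hy, rfl⟩ := mem_coneOf_pair.1 hγ
    rcases hy.eq_or_lt with rfl | hy
    · exact hγi (G.eq_alpha_of_eq_smul hΦ hx (by rw [zero_smul, add_zero]))
    -- `σ b` is a positive combination of `σ γ ∈ C` and `α i ∈ C`
    refine hσbC (hbc.1 _ hσγC _ hi ⟨mem_coneOf_pair.2 ⟨y⁻¹, x / y, by positivity,
      by positivity, ?_⟩, (G.mem_PhiPos.1 hσb).1⟩)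
    have := hy.ne'
    simp only [map_add, map_smul, pi_simple_alpha]
    match_scalars <;> grind

theorem exists_bil_alpha_pos {v : V} (hv : v ∈ G.posCone) (h : 0 < G.bil v v) :
    ∃ i, 0 < G.bil (G.α i) v := by
  obtain ⟨e, he, hsum⟩ := G.mem_posCone_iff.1 hv
  by_contra! hall
  refine h.not_ge ?_
  nth_rewrite 1 [← hsum]
  simp only [map_sum, map_smul, LinearMap.sum_apply, LinearMap.smul_apply, smul_eq_mul]
  exact Finset.sum_nonpos fun b _ => mul_nonpos_of_nonneg_of_nonpos (he b) (hall b)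

theorem exists_alpha_mem {C : Set V} (hC : C ⊆ G.PhiPos) (hfin : C.Finite) (hne : C.Nonempty)
    (hcl : G.IsClosedSet (G.PhiPos \ C)) : ∃ i, G.α i ∈ C := by
  let r : V → V → Prop := fun x y => x ≠ y ∧ y - x ∈ G.posCone
  have : IsStrictOrder V r :=
    { irrefl := fun x h => h.1 rfl
      trans := fun x y z hxy hyz => by
        refine ⟨fun hxz => hxy.1 ?_, by simpa using add_mem hyz.2 hxy.2⟩
        subst hxz
        exact (sub_eq_zero.1 (G.eq_zero_of_mem_posCone_of_neg_mem hxy.2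
          (by simpa using hyz.2))).symm }
  obtain ⟨⟨β, hβC⟩, -, hmin⟩ :=
    (hfin.wellFoundedOn (r := r)).has_min Set.univ ⟨⟨_, hne.some_mem⟩, trivial⟩
  obtain ⟨hβΦ, hβcone⟩ := G.mem_PhiPos.1 (hC hβC)
  obtain ⟨i, hi⟩ := G.exists_bil_alpha_pos hβcone (by rw [G.bil_self_of_mem_Phi hβΦ]; norm_num)
  by_contra! hnone
  have hβi : β ≠ G.α i := fun h => hnone i (h ▸ hβC)
  set t := 2 * G.bil (G.α i) β
  have key : t • G.α i + G.π (cs.simple i) β = β := by rw [G.simple_refl]; abel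
  by_cases hσC : G.π (cs.simple i) β ∈ C
  · -- `s i β` would lie strictly below the minimal element `β`
    refine hmin ⟨_, hσC⟩ trivial (show r (G.π (cs.simple i) β) β from ⟨fun h => ?_, ?_⟩)
    · rw [h, add_eq_right, smul_eq_zero] at key
      exact key.elim (by positivity) (G.ne_zero_of_mem_Phi (G.alpha_mem_Phi i))
    · rw [sub_eq_of_eq_add key.symm]
      exact G.posCone.smul_mem (by positivity) (G.alpha_mem_posCone i)
  · exact (hcl _ ⟨G.alpha_mem_PhiPos i, hnone i⟩ _ ⟨G.pi_simple_mem_PhiPos (hC hβC) hβi, hσC⟩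
      ⟨mem_coneOf_pair.2 ⟨t, 1, by positivity, zero_le_one, by rw [one_smul, key]⟩, hβΦ⟩).2 hβC

theorem exists_pi_separating {C : Set V} (hC : C ⊆ G.PhiPos) (hfin : C.Finite)
    (hbc : G.IsBiclosed C) :
    ∃ w : W, (∀ β ∈ C, -G.π w β ∈ G.posCone) ∧ ∀ β ∈ G.PhiPos \ C, G.π w β ∈ G.posCone := by
  induction hn : C.ncard using Nat.strong_induction_on generalizing C with
  | _ n ih =>
  rcases C.eq_empty_or_nonempty with rfl | hne
  · exact ⟨1, by simp, fun β hβ => by rw [map_one]; exact (G.mem_PhiPos.1 hβ.1).2⟩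
  obtain ⟨i, hi⟩ := G.exists_alpha_mem hC hfin hne hbc.2
  have hσσ := G.pi_simple_pi_simple i
  have hC' : G.π (cs.simple i) ⁻¹' (C \ {G.α i}) ⊆ G.PhiPos := fun γ hγ => by
    simpa [hσσ] using G.pi_simple_mem_PhiPos (hC hγ.1) hγ.2
  have hlt : (G.π (cs.simple i) ⁻¹' (C \ {G.α i})).ncard < n := by
    rw [Set.ncard_preimage_of_injective_subset_range (G.π _).injective
      (by simp [(G.π _).surjective.range_eq]),
      Set.ncard_sdiff_singleton_of_mem hi, ← hn]
    exact Nat.sub_lt ((Set.ncard_pos hfin).2 hne) one_pos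
  obtain ⟨w, hw₁, hw₂⟩ := ih _ hlt hC' (hfin.sdiff.preimage (G.π _).injective.injOn)
    (hbc.preimage_pi_simple G hC hi) rfl
  rw [G.PhiPos_diff_preimage_pi_simple hC hi] at hw₂
  refine ⟨w * cs.simple i, fun β hβ => ?_, fun β hβ => ?_⟩ <;> rw [pi_mul_apply]
  · rcases eq_or_ne β (G.α i) with rfl | hβi
    · rw [pi_simple_alpha, map_neg, neg_neg]
      exact hw₂ _ (Set.mem_insert _ _)
    · exact hw₁ _ (by simpa [hσσ] using And.intro hβ hβi)
  · exact hw₂ _ (Set.mem_insert_of_mem _ (by simpa [hσσ] using hβ))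

theorem isSeparable_of_isBiclosed {C : Set V} (hC : C ⊆ G.PhiPos) (hfin : C.Finite)
    (hbc : G.IsBiclosed C) : G.IsSeparable C := by
  obtain ⟨w, hw₁, hw₂⟩ := G.exists_pi_separating hC hfin hbc
  refine Set.eq_singleton_iff_unique_mem.2 ⟨by simp [coneOf_eq_hull, zero_mem], ?_⟩
  rintro v ⟨hv₁, hv₂⟩
  rw [coneOf_eq_hull] at hv₁ hv₂
  have h₁ : v ∈ G.posCone.comap (-(G.π w : V →ₗ[ℝ] V)) :=
    Submodule.span_le.2 (fun β hβ => hw₁ β hβ) hv₁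
  have h₂ : v ∈ G.posCone.comap (G.π w : V →ₗ[ℝ] V) :=
    Submodule.span_le.2 (fun β hβ => hw₂ β hβ) hv₂
  rw [PointedCone.mem_comap] at h₁ h₂
  exact (G.π w).map_eq_zero_iff.1 (G.eq_zero_of_mem_posCone_of_neg_mem h₂ h₁)

theorem subset_closure2 (A : Set V) : A ⊆ G.closure2 A :=
  Set.subset_sInter fun _ hC => hC.1

theorem closure2_subset {A C : Set V} (hAC : A ⊆ C) (hC : C ⊆ G.PhiPos)
    (hcl : G.IsClosedSet C) : G.closure2 A ⊆ C :=
  Set.sInter_subset_of_mem ⟨hAC, hC, hcl⟩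

end GeomRep

/-- If the 2-closure of `A ⊆ Φ⁺` is finite and biclosed, then it equals
`cone(A) ∩ Φ`. -/
theorem stmt13 {B : Type*} [Fintype B] {W : Type*} [Group W]
    {M : CoxeterMatrix B} {cs : CoxeterSystem M W}
    {V : Type*} [AddCommGroup V] [Module ℝ V] (G : GeomRep M cs V)
    (A : Set V) (hA : A ⊆ G.PhiPos)
    (hfin : (G.closure2 A).Finite) (hbc : G.IsBiclosed (G.closure2 A)) :
    G.closure2 A = coneOf A ∩ G.Phi := by
  have hsub : coneOf A ∩ G.Phi ⊆ G.PhiPos :=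
    G.coneOf_inter_Phi_subset_PhiPos fun a ha => (G.mem_PhiPos.1 (hA ha)).2
  have hsep := G.isSeparable_of_isBiclosed (G.closure2_subset hA subset_rfl G.isClosedSet_PhiPos)
    hfin hbc
  have hA' : A ⊆ coneOf A ∩ G.Phi := fun a ha => ⟨mem_coneOf_of_mem ha, (hA ha).1⟩
  refine (G.closure2_subset hA' hsub (G.isClosedSet_coneOf_inter_Phi A)).antisymm fun γ hγ => ?_
  by_contra hγC
  have h0 : γ ∈ coneOf (G.closure2 A) ∩ coneOf (G.PhiPos \ G.closure2 A) :=
    ⟨coneOf_mono (G.subset_closure2 A) hγ.1, mem_coneOf_of_mem ⟨hsub hγ, hγC⟩⟩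
  rw [hsep] at h0
  exact G.ne_zero_of_mem_Phi hγ.2 h0
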